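/- The deref notion of reduction preserves de Bruijn closedness of the redex seen as a subterm at depth d: if (λ.E[n]) V is closed at depth d and Δ(E) = n, then (λ.E[↑(V, n+1, 0)]) V is closed at depth d. -/

import Mathlib

inductive Tm : Type
  | var : Nat → Tm
  | lam : Tm → Tm
  | app : Tm → Tm → Tm
deriving DecidableEq

/-- shift ↑(M, x, m): increment all indices ≥ m by x -/
def shift : Tm → Nat → Nat → Tm
  | .var n, x, m => if n ≥ m then .var (n + x) else .var n
  | .lam M, x, m => .lam (shift M x (m+1))
  | .app M N, x, m => .app (shift M x m) (shift N x m)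

/-- apply a renaming environment R to a term: (R)n = n + R(n) -/
def ren : List Nat → Tm → Tm
  | R, .var n => .var (n + R.getD n 0)
  | R, .lam M => .lam (ren (0 :: R) M)
  | R, .app M N => .app (ren R M) (ren R N)

/-- values are lambda abstractions -/
def IsVal (M : Tm) : Prop := ∃ M', M = Tm.lam M'

/-- Evaluation contexts E ::= [] | E M | (λ.E) M | (λ.E'[n]) E with n = Δ(E') -/
inductive ECtx : Type
  | hole : ECtx
  | appL : ECtx → Tm → ECtx
  | bind : ECtx → Tm → ECtx
  | opC  : ECtx → ECtx → ECtx

/-- Δ : E → ℕ -/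
def delta : ECtx → Nat
  | .hole => 0
  | .appL E _ => delta E
  | .bind E _ => delta E + 1
  | .opC _ E => delta E

/-- plugging E[M]; in the opC case the bound variable is Δ(E') -/
def plugE : ECtx → Tm → Tm
  | .hole, M => M
  | .appL E N, M => .app (plugE E M) N
  | .bind E N, M => .app (.lam (plugE E M)) N
  | .opC E' E, M => .app (.lam (plugE E' (.var (delta E')))) (plugE E M)

/-- closed at depth d -/
def ClosedAt : Tm → Nat → Prop
  | .var n, d => n < d
  | .lam M, d => ClosedAt M (d+1)
  | .app M N, d => ClosedAt M d ∧ ClosedAt N d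

/-
A shift by `x` raises the depth at which a term is closed by at most `x`; and `E[·]` only
inspects its argument under the `Δ(E)` binders of its `bind` layers (the hole of an `opC E' E`
layer lies in `E`, while `E'` is plugged with a fixed variable). So the body `E[n]` may have its
hole refilled by `↑(V, n+1, 0)`, which is closed at depth `d + (n + 1)` because `V` is closed at `d`.
-/

theorem ClosedAt.shift {V : Tm} {d : Nat} (hV : ClosedAt V d) (x m : Nat) :
    ClosedAt (shift V x m) (d + x) := by
  induction V generalizing d m with
  | var k =>
    simp only [ClosedAt] at hV
    unfold _root_.shift
    split <;> simp only [ClosedAt] <;> omega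
  | lam M ih => simpa only [_root_.shift, ClosedAt, Nat.add_right_comm] using ih hV (m + 1)
  | app M N ihM ihN => exact ⟨ihM hV.1 m, ihN hV.2 m⟩

theorem ClosedAt.plugE_replace {E : ECtx} {M N : Tm} {d : Nat} (hE : ClosedAt (plugE E M) d)
    (hN : ClosedAt N (d + delta E)) : ClosedAt (plugE E N) d := by
  induction E generalizing d with
  | hole => exact hN
  | appL E T ih => exact ⟨ih hE.1 hN, hE.2⟩
  | bind E T ih =>
    refine ⟨ih hE.1 ?_, hE.2⟩
    rwa [delta, ← Nat.add_assoc, Nat.add_right_comm] at hN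
  | opC E' E _ ih => exact ⟨hE.1, ih hE.2 hN⟩

theorem deref_preserves_closedAt :
    ∀ (E : ECtx) (n d : Nat) (V : Tm), IsVal V → delta E = n →
      ClosedAt (.app (.lam (plugE E (.var n))) V) d →
      ClosedAt (.app (.lam (plugE E (shift V (n+1) 0))) V) d := by
  rintro E n d V - rfl ⟨hBody, hV⟩
  have hShift : ClosedAt (shift V (delta E + 1) 0) (d + 1 + delta E) := by
    simpa only [Nat.add_comm, Nat.add_left_comm] using hV.shift (delta E + 1) 0
  exact ⟨hBody.plugE_replace hShift, hV⟩
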